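/- Let T : S_n(ℝ) → S_n(ℝ) be a linear transformation such that T(A) is positive definite whenever A is positive definite. Then the following are equivalent: (i) for every A ∈ S_n(ℝ), if T(A) is positive definite then A is positive definite; (ii) for every A ∈ S_n(ℝ), if A is positive semi-definite and singular then T(A) is positive semi-definite and singular. -/

import Mathlib

open Matrix

/-!
(i) ⇒ (ii): for `A ⪰ 0` and `ε > 0` the matrix `A + εI` is positive definite, hence so is
`T(A) + ε T(I)`; letting `ε → 0` gives `T(A) ⪰ 0`. If `T(A)` were nonsingular it would be positive
definite, and then so would `A`.

(ii) ⇒ (i): if `T(A) ≻ 0` but `A` is not positive definite, let `μ ≤ 0` be the least eigenvalue of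
`A`. Then `A - μI` is positive semi-definite and singular, while `T(A - μI) = T(A) + (-μ) T(I)` is
positive definite.
-/

/-- The space `Sₙ(ℝ)` of `n × n` real symmetric matrices, as a submodule of the space of
all `n × n` real matrices. -/
def SymMat (n : ℕ) : Submodule ℝ (Matrix (Fin n) (Fin n) ℝ) where
  carrier := {A | A.IsSymm}
  add_mem' := fun ha hb => ha.add hb
  zero_mem' := by simp [Matrix.IsSymm]
  smul_mem' := fun c _ hA => hA.smul c

open Filter Topology

theorem nonneg_of_forall_pos_nonneg_add_mul {a b : ℝ} (h : ∀ ε > 0, 0 ≤ a + ε * b) : 0 ≤ a := by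
  have hlim : Tendsto (fun ε => a + ε * b) (𝓝[>] 0) (𝓝 (a + 0 * b)) :=
    tendsto_const_nhds.add
      (tendsto_nhdsWithin_of_tendsto_nhds tendsto_id |>.mul tendsto_const_nhds)
  rw [zero_mul, add_zero] at hlim
  exact ge_of_tendsto hlim (eventually_nhdsWithin_of_forall h)

namespace Matrix

variable {n : Type*} [Fintype n]

theorem PosSemidef.of_forall_posSemidef_add_smul {M N : Matrix n n ℝ} (hM : M.IsHermitian)
    (h : ∀ ε : ℝ, 0 < ε → (M + ε • N).PosSemidef) : M.PosSemidef :=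
  .of_dotProduct_mulVec_nonneg hM fun x => nonneg_of_forall_pos_nonneg_add_mul fun ε hε => by
    simpa [add_mulVec, smul_mulVec] using (h ε hε).dotProduct_mulVec_nonneg x

theorem det_sub_algebraMap_eq_zero_of_mem_spectrum [DecidableEq n] {K : Type*} [Field K]
    {A : Matrix n n K} {μ : K} (hμ : μ ∈ spectrum K A) : (A - algebraMap K _ μ).det = 0 := by
  have h0 : (0 : K) ∈ spectrum K (A - algebraMap K _ μ) := by
    rw [← spectrum.sub_singleton_eq]
    exact ⟨μ, hμ, μ, rfl, sub_self μ⟩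
  rwa [spectrum.zero_mem_iff, isUnit_iff_isUnit_det, isUnit_iff_ne_zero, not_not] at h0

theorem IsHermitian.posSemidef_sub_algebraMap [DecidableEq n] {A : Matrix n n ℝ}
    (hA : A.IsHermitian) {μ : ℝ} (hμ : μ ∈ lowerBounds (spectrum ℝ A)) :
    (A - algebraMap ℝ _ μ).PosSemidef := by
  refine posSemidef_iff_isHermitian_and_spectrum_nonneg.mpr ⟨?_, ?_⟩
  · exact hA.sub (IsSelfAdjoint.algebraMap _ (.all μ))
  · rw [← spectrum.sub_singleton_eq]
    rintro _ ⟨ν, hν, _, rfl, rfl⟩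
    exact sub_nonneg.mpr (hμ hν)

theorem IsHermitian.exists_isLeast_spectrum_nonpos [DecidableEq n] {A : Matrix n n ℝ}
    (hA : A.IsHermitian) (hA' : ¬A.PosDef) : ∃ μ, IsLeast (spectrum ℝ A) μ ∧ μ ≤ 0 := by
  obtain ⟨i, hi⟩ : ∃ i, hA.eigenvalues i ≤ 0 := by
    simpa [hA.posDef_iff_eigenvalues_pos] using hA'
  obtain ⟨μ, hμ, hmin⟩ := Set.exists_min_image _ id A.finite_real_spectrum
    ⟨_, hA.eigenvalues_mem_spectrum_real i⟩
  exact ⟨μ, ⟨hμ, hmin⟩, (hmin _ (hA.eigenvalues_mem_spectrum_real i)).trans hi⟩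

end Matrix

namespace SymMat

variable {n m : ℕ}

def one (n : ℕ) : SymMat n := ⟨1, isSymm_one⟩

@[simp] lemma coe_one : (one n : Matrix (Fin n) (Fin n) ℝ) = 1 := rfl

lemma isHermitian (A : SymMat n) : (A : Matrix (Fin n) (Fin n) ℝ).IsHermitian :=
  isHermitian_iff_isSymm.mpr A.2

variable {T : SymMat n →ₗ[ℝ] SymMat m}

lemma posSemidef_map_of_posSemidef
    (hT : ∀ A : SymMat n, (A : Matrix (Fin n) (Fin n) ℝ).PosDef →
      (T A : Matrix (Fin m) (Fin m) ℝ).PosDef)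
    {A : SymMat n} (hA : (A : Matrix (Fin n) (Fin n) ℝ).PosSemidef) :
    (T A : Matrix (Fin m) (Fin m) ℝ).PosSemidef := by
  refine .of_forall_posSemidef_add_smul (N := T (one n)) (isHermitian (T A)) fun ε hε => ?_
  simpa using (hT (A + ε • one n) (.posSemidef_add hA (PosDef.one.smul hε))).posSemidef

lemma posSemidef_map_and_det_map_eq_zero
    (hT : ∀ A : SymMat n, (A : Matrix (Fin n) (Fin n) ℝ).PosDef →
      (T A : Matrix (Fin m) (Fin m) ℝ).PosDef)
    (hreflect : ∀ A : SymMat n, (T A : Matrix (Fin m) (Fin m) ℝ).PosDef →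
      (A : Matrix (Fin n) (Fin n) ℝ).PosDef)
    {A : SymMat n} (hA : (A : Matrix (Fin n) (Fin n) ℝ).PosSemidef)
    (hAdet : (A : Matrix (Fin n) (Fin n) ℝ).det = 0) :
    (T A : Matrix (Fin m) (Fin m) ℝ).PosSemidef ∧ (T A : Matrix (Fin m) (Fin m) ℝ).det = 0 := by
  have hTA := posSemidef_map_of_posSemidef hT hA
  refine ⟨hTA, not_not.mp fun hdet => ?_⟩
  exact (hreflect A (hTA.posDef_iff_det_ne_zero.mpr hdet)).det_pos.ne' hAdet

lemma posDef_of_posDef_map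
    (hT : ∀ A : SymMat n, (A : Matrix (Fin n) (Fin n) ℝ).PosDef →
      (T A : Matrix (Fin m) (Fin m) ℝ).PosDef)
    (hsingular : ∀ A : SymMat n,
      (A : Matrix (Fin n) (Fin n) ℝ).PosSemidef ∧ (A : Matrix (Fin n) (Fin n) ℝ).det = 0 →
      (T A : Matrix (Fin m) (Fin m) ℝ).PosSemidef ∧ (T A : Matrix (Fin m) (Fin m) ℝ).det = 0)
    {A : SymMat n} (hTA : (T A : Matrix (Fin m) (Fin m) ℝ).PosDef) :
    (A : Matrix (Fin n) (Fin n) ℝ).PosDef := by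
  by_contra hA
  obtain ⟨μ, ⟨hμ, hμ_min⟩, hμ_nonpos⟩ := (isHermitian A).exists_isLeast_spectrum_nonpos hA
  have hB : ((A - μ • one n : SymMat n) : Matrix (Fin n) (Fin n) ℝ) = A - algebraMap ℝ _ μ := by
    simp [Algebra.algebraMap_eq_smul_one]
  obtain ⟨-, hdet⟩ := hsingular (A - μ • one n)
    ⟨hB ▸ (isHermitian A).posSemidef_sub_algebraMap hμ_min,
      hB ▸ det_sub_algebraMap_eq_zero_of_mem_spectrum hμ⟩
  have hTB : (T (A - μ • one n) : Matrix (Fin m) (Fin m) ℝ).PosDef := by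
    have hsplit : (T (A - μ • one n) : Matrix (Fin m) (Fin m) ℝ) = T A + (-μ) • T (one n) := by
      simp [sub_eq_add_neg]
    rw [hsplit]
    exact hTA.add_posSemidef ((hT _ PosDef.one).posSemidef.smul (neg_nonneg.mpr hμ_nonpos))
  exact hTB.det_pos.ne' hdet

end SymMat

/-- Let `T : Sₙ(ℝ) → Sₙ(ℝ)` be linear and preserve positive definiteness.
Then `T(A)` positive definite implies `A` positive definite (for all `A`) if and only if
`T` preserves the set of singular, positive semi-definite symmetric matrices. -/
theorem stmt11 (n : ℕ) (T : SymMat n →ₗ[ℝ] SymMat n)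
    (hT : ∀ A : SymMat n, (A : Matrix (Fin n) (Fin n) ℝ).PosDef →
      ((T A : Matrix (Fin n) (Fin n) ℝ)).PosDef) :
    (∀ A : SymMat n, ((T A : Matrix (Fin n) (Fin n) ℝ)).PosDef →
        (A : Matrix (Fin n) (Fin n) ℝ).PosDef) ↔
    (∀ A : SymMat n,
        (A : Matrix (Fin n) (Fin n) ℝ).PosSemidef ∧ (A : Matrix (Fin n) (Fin n) ℝ).det = 0 →
        ((T A : Matrix (Fin n) (Fin n) ℝ)).PosSemidef ∧
          ((T A : Matrix (Fin n) (Fin n) ℝ)).det = 0) :=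
  ⟨fun hreflect _ hA => SymMat.posSemidef_map_and_det_map_eq_zero hT hreflect hA.1 hA.2,
    fun hsingular _ => SymMat.posDef_of_posDef_map hT hsingular⟩
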